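/- The five vectors w_j ∈ R⁴ defined by w_j = N'(√cos(π/5) cos(2jπ/5), √cos(π/5) sin(2jπ/5), √cos(2π/5) cos(4jπ/5), √cos(2π/5) sin(4jπ/5)) for j = 0,…,4, with N' = √(2/√5), are unit vectors satisfying w_j · w_{j+1 mod 5} = 0 for all j. -/
import Mathlib


open Matrix BigOperators Real

/-- The vectors w_j ∈ R⁴ of the pentagon construction:
w_j = N'(√cos(π/5) cos(2jπ/5), √cos(π/5) sin(2jπ/5),
        √cos(2π/5) cos(4jπ/5), √cos(2π/5) sin(4jπ/5)), N' = √(2/√5). -/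
noncomputable def pentW (j : Fin 5) : Fin 4 → ℝ :=
  fun k =>
    Real.sqrt (2 / Real.sqrt 5) *
      ![Real.sqrt (Real.cos (Real.pi / 5)) * Real.cos (2 * (j : ℕ) * Real.pi / 5),
        Real.sqrt (Real.cos (Real.pi / 5)) * Real.sin (2 * (j : ℕ) * Real.pi / 5),
        Real.sqrt (Real.cos (2 * Real.pi / 5)) * Real.cos (4 * (j : ℕ) * Real.pi / 5),
        Real.sqrt (Real.cos (2 * Real.pi / 5)) * Real.sin (4 * (j : ℕ) * Real.pi / 5)] k

lemma pent_cos_two_pi_div_five : Real.cos (2 * Real.pi / 5) = (Real.sqrt 5 - 1) / 4 := by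
  have h : 2 * Real.pi / 5 = 2 * (Real.pi / 5) := by ring
  rw [h, Real.cos_two_mul, Real.cos_pi_div_five]
  have h5 : Real.sqrt 5 ^ 2 = 5 := Real.sq_sqrt (by norm_num)
  nlinarith [h5]

lemma pent_helper (s c d T c1 c2 x y u v : ℝ) (h1 : s * s = T) (h2 : c * c = c1)
    (h3 : d * d = c2) :
    s * (c * Real.cos x) * (s * (c * Real.cos y)) +
      s * (c * Real.sin x) * (s * (c * Real.sin y)) +
      s * (d * Real.cos u) * (s * (d * Real.cos v)) +
      s * (d * Real.sin u) * (s * (d * Real.sin v)) =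
      T * (c1 * Real.cos (x - y) + c2 * Real.cos (u - v)) := by
  rw [Real.cos_sub, Real.cos_sub]
  linear_combination
    ((Real.cos x * Real.cos y + Real.sin x * Real.sin y) * (c * c) +
      (Real.cos u * Real.cos v + Real.sin u * Real.sin v) * (d * d)) * h1 +
    (Real.cos x * Real.cos y + Real.sin x * Real.sin y) * T * h2 +
    (Real.cos u * Real.cos v + Real.sin u * Real.sin v) * T * h3

lemma pent_dot (j k : Fin 5) :
    pentW j ⬝ᵥ pentW k =
      (2 / Real.sqrt 5) *
        (Real.cos (Real.pi / 5) *
            Real.cos (2 * (j : ℕ) * Real.pi / 5 - 2 * (k : ℕ) * Real.pi / 5) +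
          Real.cos (2 * Real.pi / 5) *
            Real.cos (4 * (j : ℕ) * Real.pi / 5 - 4 * (k : ℕ) * Real.pi / 5)) := by
  have hc1 : (0:ℝ) ≤ Real.cos (Real.pi / 5) := by
    rw [Real.cos_pi_div_five]; positivity
  have hc2 : (0:ℝ) ≤ Real.cos (2 * Real.pi / 5) := by
    rw [pent_cos_two_pi_div_five]
    nlinarith [Real.sq_sqrt (show (0:ℝ) ≤ 5 by norm_num), Real.sqrt_nonneg 5]
  have h1 : Real.sqrt (2 / Real.sqrt 5) * Real.sqrt (2 / Real.sqrt 5) = 2 / Real.sqrt 5 :=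
    Real.mul_self_sqrt (by positivity)
  have h2 := Real.mul_self_sqrt hc1
  have h3 := Real.mul_self_sqrt hc2
  simp only [pentW, dotProduct, Fin.sum_univ_four, Matrix.cons_val_zero, Matrix.cons_val_one,
    Matrix.head_cons, Matrix.cons_val_two, Matrix.tail_cons, Matrix.cons_val_three]
  exact pent_helper _ _ _ _ _ _ _ _ _ _ h1 h2 h3

lemma pent_sum : Real.cos (Real.pi / 5) + Real.cos (2 * Real.pi / 5) = Real.sqrt 5 / 2 := by
  rw [Real.cos_pi_div_five, pent_cos_two_pi_div_five]; ring

/-- The w_j are unit vectors and w_j · w_{j+1 mod 5} = 0 for all j. -/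
theorem pentagon_w_vectors :
    (∀ j, pentW j ⬝ᵥ pentW j = 1) ∧ (∀ j : Fin 5, pentW j ⬝ᵥ pentW (j + 1) = 0) := by
  have h5 : Real.sqrt 5 * Real.sqrt 5 = 5 := Real.mul_self_sqrt (by norm_num)
  have h5ne : Real.sqrt 5 ≠ 0 := by positivity
  have e45 : Real.cos (4 * Real.pi / 5) = -Real.cos (Real.pi / 5) := by
    rw [show 4 * Real.pi / 5 = Real.pi - Real.pi / 5 by ring, Real.cos_pi_sub]
  have e85 : Real.cos (8 * Real.pi / 5) = Real.cos (2 * Real.pi / 5) := by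
    rw [show 8 * Real.pi / 5 = 2 * Real.pi - 2 * Real.pi / 5 by ring, Real.cos_two_pi_sub]
  have e165 : Real.cos (16 * Real.pi / 5) = -Real.cos (Real.pi / 5) := by
    rw [show (16:ℝ) * Real.pi / 5 = 6 * Real.pi / 5 + 2 * Real.pi by ring,
      Real.cos_add_two_pi,
      show (6:ℝ) * Real.pi / 5 = Real.pi - -(Real.pi / 5) by ring, Real.cos_pi_sub,
      Real.cos_neg]
  constructor
  · intro j
    rw [pent_dot, sub_self, sub_self, Real.cos_zero, mul_one, mul_one, pent_sum]
    field_simp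
  · intro j
    fin_cases j
    · rw [pent_dot]; norm_num [Fin.add_def]
      rw [e45, Real.cos_pi_div_five]; ring
    · rw [pent_dot]; norm_num [Fin.add_def]
      rw [show (2:ℝ) * π / 5 - 4 * π / 5 = -(2 * π / 5) by ring, Real.cos_neg,
        show (4:ℝ) * π / 5 - 8 * π / 5 = -(4 * π / 5) by ring, Real.cos_neg,
        e45, Real.cos_pi_div_five]
      ring
    · rw [pent_dot]; norm_num [Fin.add_def]
      rw [show (4:ℝ) * π / 5 - 6 * π / 5 = -(2 * π / 5) by ring, Real.cos_neg,
        show (8:ℝ) * π / 5 - 12 * π / 5 = -(4 * π / 5) by ring, Real.cos_neg,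
        e45, Real.cos_pi_div_five]
      ring
    · rw [pent_dot]; norm_num [Fin.add_def]
      rw [show (6:ℝ) * π / 5 - 8 * π / 5 = -(2 * π / 5) by ring, Real.cos_neg,
        show (12:ℝ) * π / 5 - 16 * π / 5 = -(4 * π / 5) by ring, Real.cos_neg,
        e45, Real.cos_pi_div_five]
      ring
    · rw [pent_dot]; norm_num [Fin.add_def]
      rw [e85, e165, Real.cos_pi_div_five]
      ring
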